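/- arXiv:2209.07236 — 2 statements merged into one kernel-verified Lean document; each statement's English description precedes it below -/
import Mathlib

section
/- Let L be a block matrix L = [[L_P, L_{PF}],[L_{PF}ᵀ, L_F]] with L_P ∈ ℝ^{m×m}, and input matrix B = [[e_1, 0],[0, I_{n-m}]]. If the pair (-L_P, e_1) is controllable, then the pair (-L, B) is controllable. -/
open Matrix

/-- Kalman controllability matrix over an arbitrary finite index type. -/
def kalman' {ι κ : Type*} [Fintype ι] [DecidableEq ι] [Fintype κ]
    (M : Matrix ι ι ℝ) (B : Matrix ι κ ℝ) :
    Matrix ι (Fin (Fintype.card ι) × κ) ℝ :=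
  Matrix.of fun i p => (M ^ (p.1 : ℕ) * B) i p.2

/-! If `u` annihilates the Kalman matrix of `(A, B)` with `B = [[B₁, 0], [0, 1]]`, the identity
block forces the second-block part of every `u Aᵏ` to vanish. The first-block part therefore
evolves under `A₁₁` alone, `(u Aᵏ)₁ = u₁ A₁₁ᵏ`, so `u₁` annihilates the Kalman matrix of
`(A₁₁, B₁)` and vanishes by controllability; then `u = 0`. -/

theorem Matrix.rank_eq_card_iff_forall_vecMul_eq_zero {ι κ K : Type*} [Fintype ι]
    [Fintype κ] [Field K] (A : Matrix ι κ K) :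
    A.rank = Fintype.card ι ↔ ∀ v : ι → K, v ᵥ* A = 0 → v = 0 := by
  rw [rank_eq_finrank_span_row, ← Set.finrank, eq_comm,
    ← linearIndependent_iff_card_eq_finrank_span, ← vecMul_injective_iff,
    ← coe_vecMulLinear, injective_iff_map_eq_zero]
  rfl

section Kalman

variable {ι κ : Type*} [Fintype ι] [DecidableEq ι] [Fintype κ]

theorem vecMul_kalman'_eq_zero_iff (M : Matrix ι ι ℝ) (B : Matrix ι κ ℝ) (v : ι → ℝ) :
    v ᵥ* kalman' M B = 0 ↔ ∀ k < Fintype.card ι, v ᵥ* (M ^ k * B) = 0 := by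
  constructor
  · intro h k hk
    funext c
    simpa [kalman', vecMul, dotProduct] using congrFun h (⟨k, hk⟩, c)
  · intro h
    funext p
    simpa [kalman', vecMul, dotProduct] using congrFun (h p.1 p.1.2) p.2

end Kalman

theorem vecMul_fromBlocks_zero_zero_one {ι₁ ι₂ κ : Type*} [Fintype ι₁] [Fintype ι₂]
    [DecidableEq ι₂] (B₁ : Matrix ι₁ κ ℝ) (w : ι₁ ⊕ ι₂ → ℝ) :
    w ᵥ* fromBlocks B₁ 0 0 (1 : Matrix ι₂ ι₂ ℝ) = Sum.elim ((w ∘ Sum.inl) ᵥ* B₁) (w ∘ Sum.inr) := by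
  simp [vecMul_fromBlocks]

section BlockSystem

variable {ι₁ ι₂ : Type*} [Fintype ι₁] [Fintype ι₂] [DecidableEq ι₁] [DecidableEq ι₂]
  (A₁₁ : Matrix ι₁ ι₁ ℝ) (A₁₂ : Matrix ι₁ ι₂ ℝ) (A₂₁ : Matrix ι₂ ι₁ ℝ)
  (A₂₂ : Matrix ι₂ ι₂ ℝ)

theorem comp_inl_vecMul_fromBlocks_pow {u : ι₁ ⊕ ι₂ → ℝ} {N : ℕ}
    (hinr : ∀ k < N, (u ᵥ* fromBlocks A₁₁ A₁₂ A₂₁ A₂₂ ^ k) ∘ Sum.inr = 0) :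
    ∀ k ≤ N, (u ᵥ* fromBlocks A₁₁ A₁₂ A₂₁ A₂₂ ^ k) ∘ Sum.inl = (u ∘ Sum.inl) ᵥ* A₁₁ ^ k := by
  intro k
  induction k with
  | zero => simp
  | succ k ih =>
    intro hk
    rw [pow_succ, ← vecMul_vecMul, vecMul_fromBlocks, Sum.elim_comp_inl, ih (by omega),
      hinr k (by omega), zero_vecMul, add_zero, vecMul_vecMul, pow_succ]

theorem rank_kalman'_fromBlocks_zero_zero_one {κ : Type*} [Fintype κ] {B₁ : Matrix ι₁ κ ℝ}
    (hctrl : (kalman' A₁₁ B₁).rank = Fintype.card ι₁) :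
    (kalman' (fromBlocks A₁₁ A₁₂ A₂₁ A₂₂) (fromBlocks B₁ 0 0 (1 : Matrix ι₂ ι₂ ℝ))).rank =
      Fintype.card (ι₁ ⊕ ι₂) := by
  rw [rank_eq_card_iff_forall_vecMul_eq_zero] at hctrl ⊢
  intro u hu
  rw [vecMul_kalman'_eq_zero_iff] at hu
  set N := Fintype.card (ι₁ ⊕ ι₂)
  have hout : ∀ k < N, (u ᵥ* fromBlocks A₁₁ A₁₂ A₂₁ A₂₂ ^ k) ∘ Sum.inl ᵥ* B₁ = 0 ∧
      (u ᵥ* fromBlocks A₁₁ A₁₂ A₂₁ A₂₂ ^ k) ∘ Sum.inr = 0 := fun k hk => by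
    rw [← Sum.elim_eq_iff, Sum.elim_zero_zero, ← vecMul_fromBlocks_zero_zero_one, vecMul_vecMul]
    exact hu k hk
  have hinl := comp_inl_vecMul_fromBlocks_pow A₁₁ A₁₂ A₂₁ A₂₂ fun k hk => (hout k hk).2
  have hN : Fintype.card ι₁ ≤ N := by simp [N]
  have hx : u ∘ Sum.inl = 0 := by
    refine hctrl _ ((vecMul_kalman'_eq_zero_iff _ _ _).2 fun k hk => ?_)
    rw [← vecMul_vecMul, ← hinl k (by omega)]
    exact (hout k (by omega)).1
  have hy : u ∘ Sum.inr = 0 := by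
    funext j
    have hpos : 0 < N := Fintype.card_pos_iff.2 ⟨Sum.inr j⟩
    simpa using congrFun (hout 0 hpos).2 j
  rw [← Sum.elim_comp_inl_inr u, hx, hy, Sum.elim_zero_zero]

end BlockSystem

theorem block_controllable_of_path_block_general {m r : ℕ}
    (LP : Matrix (Fin m) (Fin m) ℝ)
    (LPF : Matrix (Fin m) (Fin r) ℝ)
    (LF : Matrix (Fin r) (Fin r) ℝ)
    (e₁ : Matrix (Fin m) (Fin 1) ℝ)
    (hctrl : (kalman' (-LP) e₁).rank = m) :
    (kalman' (-(Matrix.fromBlocks LP LPF LPF.transpose LF))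
        (Matrix.fromBlocks e₁ 0 0 (1 : Matrix (Fin r) (Fin r) ℝ))).rank = m + r := by
  rw [fromBlocks_neg]
  simpa using rank_kalman'_fromBlocks_zero_zero_one (-LP) (-LPF) (-LPF.transpose) (-LF)
    (by simpa using hctrl)

/-- for a symmetric block matrix `L = [[L_P, L_PF],[L_PFᵀ, L_F]]`
and input matrix `B = [[e₁, 0],[0, I]]` (one input at node 1 of the first
block, independent inputs on every node of the second block), if `(-L_P, e₁)`
is controllable, then `(-L, B)` is controllable. -/
theorem block_controllable_of_path_block {m r : ℕ}
    (LP : Matrix (Fin m) (Fin m) ℝ) (hLP : LP.IsSymm)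
    (LPF : Matrix (Fin m) (Fin r) ℝ)
    (LF : Matrix (Fin r) (Fin r) ℝ) (hLF : LF.IsSymm)
    (e₁ : Matrix (Fin m) (Fin 1) ℝ)
    (he₁ : e₁ = Matrix.of fun (i : Fin m) (_ : Fin 1) => if (i : ℕ) = 0 then (1:ℝ) else 0)
    (hctrl : (kalman' (-LP) e₁).rank = m) :
    (kalman' (-(Matrix.fromBlocks LP LPF LPF.transpose LF))
        (Matrix.fromBlocks e₁ 0 0 (1 : Matrix (Fin r) (Fin r) ℝ))).rank = m + r :=
  block_controllable_of_path_block_general LP LPF LF e₁ hctrl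
end

section
/- If H ∈ ℝ^{q×p} has rank q (full row rank), then for the symmetric block matrix L = [[L_C, Hᵀ],[H, L_F]] with arbitrary symmetric L_C, L_F, and input matrix B = [I_p; 0], the pair (-L, B) is controllable. -/
open Matrix

/-- A matrix whose transpose has trivial kernel has full row rank. -/
lemma rank_eq_card_of_ker_transpose {m n : Type*} [Fintype m] [Fintype n]
    (A : Matrix m n ℝ) (h : ∀ x : m → ℝ, Aᵀ *ᵥ x = 0 → x = 0) :
    A.rank = Fintype.card m := by
  rw [← Matrix.rank_transpose]
  have hker : LinearMap.ker Aᵀ.mulVecLin = ⊥ := Matrix.ker_mulVecLin_eq_bot_iff.mpr h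
  rw [Matrix.rank, LinearMap.finrank_range_of_inj (LinearMap.ker_eq_bot.mp hker),
    Module.finrank_pi]

/-- Full row rank matrices have injective `vecMul` kernel. -/
lemma vecMul_eq_zero_of_full_rank {q p : ℕ} (H : Matrix (Fin q) (Fin p) ℝ)
    (hH : H.rank = q) (y : Fin q → ℝ) (hy : y ᵥ* H = 0) : y = 0 := by
  have h1 : Hᵀ.rank = q := by rw [Matrix.rank_transpose, hH]
  have h2 := LinearMap.finrank_range_add_finrank_ker Hᵀ.mulVecLin
  rw [show Module.finrank ℝ ↥(LinearMap.range Hᵀ.mulVecLin) = Hᵀ.rank from rfl, h1,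
    Module.finrank_pi, Fintype.card_fin] at h2
  have hker : LinearMap.ker Hᵀ.mulVecLin = ⊥ :=
    Submodule.finrank_eq_zero.mp (by omega)
  have hmem : y ∈ LinearMap.ker Hᵀ.mulVecLin := by
    simp only [LinearMap.mem_ker, Matrix.mulVecLin_apply, Matrix.mulVec_transpose, hy]
  rw [hker] at hmem
  simpa using hmem

/-- if the leader-follower connection block `H` has full row
rank `q`, then for the symmetric block matrix `L = [[L_C, Hᵀ],[H, L_F]]` with
inputs `B = [I_p; 0]` on the leaders, the pair `(-L, B)` is controllable. -/
theorem full_row_rank_connection_controllable {p q : ℕ}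
    (LC : Matrix (Fin p) (Fin p) ℝ) (hLC : LC.IsSymm)
    (LF : Matrix (Fin q) (Fin q) ℝ) (hLF : LF.IsSymm)
    (H : Matrix (Fin q) (Fin p) ℝ) (hH : H.rank = q) :
    (kalman' (-(Matrix.fromBlocks LC H.transpose H LF))
        (Matrix.fromRows (1 : Matrix (Fin p) (Fin p) ℝ) 0)).rank = p + q := by
  set M : Matrix (Fin p ⊕ Fin q) (Fin p ⊕ Fin q) ℝ :=
    -(Matrix.fromBlocks LC H.transpose H LF) with hM
  set B : Matrix (Fin p ⊕ Fin q) (Fin p) ℝ :=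
    Matrix.fromRows (1 : Matrix (Fin p) (Fin p) ℝ) 0 with hB
  have hcard : Fintype.card (Fin p ⊕ Fin q) = p + q := by simp
  rw [show p + q = Fintype.card (Fin p ⊕ Fin q) from hcard.symm]
  apply rank_eq_card_of_ker_transpose
  intro x hx
  -- key consequence of hx
  have key : ∀ k : Fin (Fintype.card (Fin p ⊕ Fin q)), x ᵥ* (M ^ (k : ℕ) * B) = 0 := by
    intro k
    funext j
    have := congr_fun hx (k, j)
    simpa [kalman', Matrix.mulVec, Matrix.vecMul, dotProduct,
      mul_comm] using this
  -- leader-rank bound : q ≤ p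
  have hqp : q ≤ p := by
    have := H.rank_le_card_width
    rw [hH, Fintype.card_fin] at this
    exact this
  -- vecMul against B extracts the leader components
  have hvB : ∀ v : (Fin p ⊕ Fin q) → ℝ, ∀ j : Fin p, (v ᵥ* B) j = v (Sum.inl j) := by
    intro v j
    simp [hB, Matrix.vecMul, dotProduct, Fintype.sum_sum_type,
      Matrix.fromRows_apply_inl, Matrix.fromRows_apply_inr, Matrix.one_apply,
      mul_ite, Finset.sum_ite_eq']
  -- Step 1: leader components of x vanish
  have hxl : ∀ j : Fin p, x (Sum.inl j) = 0 := by
    intro j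
    have hp : 0 < p := j.pos
    have hk : (0 : ℕ) < Fintype.card (Fin p ⊕ Fin q) := by rw [hcard]; omega
    have h0 := congr_fun (key ⟨0, hk⟩) j
    simp only [Fin.val_mk, pow_zero, Matrix.one_mul, hvB, Pi.zero_apply] at h0
    exact h0
  -- Step 2: follower components of x vanish
  have hxr : ∀ i : Fin q, x (Sum.inr i) = 0 := by
    intro i
    have hq : 0 < q := i.pos
    have hk : (1 : ℕ) < Fintype.card (Fin p ⊕ Fin q) := by rw [hcard]; omega
    have h1 := key ⟨1, hk⟩
    simp only [Fin.val_mk, pow_one, ← Matrix.vecMul_vecMul] at h1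
    -- so (x ᵥ* M) (inl j) = 0 for all j
    have h2 : ∀ j : Fin p, (x ᵥ* M) (Sum.inl j) = 0 := by
      intro j
      have := congr_fun h1 j
      simp only [hvB, Pi.zero_apply] at this
      exact this
    -- compute (x ᵥ* M)(inl j)
    have h3 : (fun i => x (Sum.inr i)) ᵥ* H = 0 := by
      funext j
      have := h2 j
      simp only [hM, Matrix.vecMul, dotProduct, Fintype.sum_sum_type,
        Matrix.neg_apply, Matrix.fromBlocks_apply₁₁, Matrix.fromBlocks_apply₂₁,
        mul_neg] at this ⊢
      simp only [hxl, zero_mul, neg_zero, Finset.sum_const_zero, zero_add] at this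
      have : -∑ i₂ : Fin q, x (Sum.inr i₂) * H i₂ j = 0 := by
        simpa [Finset.sum_neg_distrib] using this
      simpa [Matrix.vecMul, dotProduct] using neg_eq_zero.mp this
    have := vecMul_eq_zero_of_full_rank H hH _ h3
    exact congr_fun this i
  funext i
  cases i with
  | inl j => exact hxl j
  | inr i => exact hxr i
end
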